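/- Fix $\alpha_1 \ne 0$, $\alpha_2 > 0$, $\sigma > 0$, and an interval $[x_{\min}, x_{\max}]$ with $0 < x_{\min} < x_{\max}$. Define $h(x_1, x_2) = e^{-2\alpha_2(1/x_1 + 1/x_2)} (1/x_1 - 1/x_2)^2$ for $x_1, x_2 \in [x_{\min}, x_{\max}]$. Then $h$ is maximized (over ordered pairs with $x_1 \le x_2$) at $x_2^* = x_{\max}$ and $x_1^* = \max\left(\frac{\alpha_2 x_{\max}}{\alpha_2 + x_{\max}}, x_{\min}\right)$. -/

import Mathlib

/-!
In the variables `u = 1/x₁ ≥ v = 1/x₂ ≥ b = 1/x_max` the function is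
`e^{-2α(u+v)} (u - v)²`, which increases as `v` decreases, so `x₂ = x_max` is optimal.
Then `h = (e^{-2αb} f(u - b))²` with `f(t) = t e^{-αt}`; `f` increases on `[0, 1/α]` and
attains its maximum at `1/α`, so the best admissible `u - b ≤ 1/x_min - b` is
`min (1/α) (1/x_min - b)`, which is `1/x₁* - b`.
-/

open Real

lemma mul_exp_neg_mul_le (α t : ℝ) (hα : 0 < α) : t * exp (-(α * t)) ≤ α⁻¹ * exp (-1) := by
  have htangent : α * t ≤ exp (α * t - 1) := by linarith [add_one_le_exp (α * t - 1)]
  have hsplit : exp (-1) = exp (-(α * t)) * exp (α * t - 1) := by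
    rw [← exp_add]; ring_nf
  rw [hsplit, le_inv_mul_iff₀ hα]
  calc α * (t * exp (-(α * t))) = exp (-(α * t)) * (α * t) := by ring
    _ ≤ exp (-(α * t)) * exp (α * t - 1) := by gcongr

lemma mul_exp_neg_mul_le_of_le {α t s : ℝ} (hs : 0 ≤ s) (hts : t ≤ s) (hαs : α * s ≤ 1) :
    t * exp (-(α * t)) ≤ s * exp (-(α * s)) := by
  have hlin : t ≤ s * (α * (t - s) + 1) := by nlinarith
  have hsplit : exp (-(α * s)) = exp (-(α * t)) * exp (α * (t - s)) := by
    rw [← exp_add]; ring_nf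
  calc t * exp (-(α * t)) = exp (-(α * t)) * t := by ring
    _ ≤ exp (-(α * t)) * (s * exp (α * (t - s))) := by
        gcongr
        exact hlin.trans (mul_le_mul_of_nonneg_left (add_one_le_exp _) hs)
    _ = s * exp (-(α * s)) := by rw [hsplit]; ring

lemma mul_exp_neg_mul_le_min {α t T : ℝ} (hα : 0 < α) (ht : 0 ≤ t) (htT : t ≤ T) :
    t * exp (-(α * t)) ≤ min α⁻¹ T * exp (-(α * min α⁻¹ T)) := by
  rcases le_total α⁻¹ T with hT | hT
  · rw [min_eq_left hT, mul_inv_cancel₀ hα.ne']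
    exact mul_exp_neg_mul_le α t hα
  · rw [min_eq_right hT]
    have hαT : α * T ≤ 1 := by
      simpa [mul_inv_cancel₀ hα.ne'] using mul_le_mul_of_nonneg_left hT hα.le
    exact mul_exp_neg_mul_le_of_le (ht.trans htT) htT hαT

lemma exp_mul_sq_le_of_le {α u v b : ℝ} (hα : 0 ≤ α) (hbv : b ≤ v) (hvu : v ≤ u) :
    exp (-2 * α * (u + v)) * (u - v) ^ 2 ≤ exp (-2 * α * (u + b)) * (u - b) ^ 2 := by
  have hexp : exp (-2 * α * (u + v)) ≤ exp (-2 * α * (u + b)) := exp_le_exp.mpr (by nlinarith)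
  have hsq : (u - v) ^ 2 ≤ (u - b) ^ 2 := pow_le_pow_left₀ (by linarith) (by linarith) 2
  exact mul_le_mul hexp hsq (sq_nonneg _) (exp_pos _).le

lemma exp_mul_sq_eq (α u b : ℝ) :
    exp (-2 * α * (u + b)) * (u - b) ^ 2
      = (exp (-(2 * α * b)) * ((u - b) * exp (-(α * (u - b))))) ^ 2 := by
  rw [mul_pow, mul_pow, ← exp_nat_mul, ← exp_nat_mul, mul_left_comm, ← exp_add]
  ring_nf

lemma one_div_max_div_add {α xmin xmax : ℝ} (hα : 0 < α) (hmin : 0 < xmin) (hmax : 0 < xmax) :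
    1 / max (α * xmax / (α + xmax)) xmin = 1 / xmax + min α⁻¹ (1 / xmin - 1 / xmax) := by
  have hx : 1 / (α * xmax / (α + xmax)) = 1 / xmax + α⁻¹ := by field_simp
  rcases le_total xmin (α * xmax / (α + xmax)) with hc | hc
  · rw [max_eq_left hc, hx, min_eq_left]
    have := one_div_le_one_div_of_le hmin hc
    linarith
  · rw [max_eq_right hc, min_eq_right]
    · ring
    · have := one_div_le_one_div_of_le (by positivity) hc
      linarith

theorem stmt6 (α2 xmin xmax : ℝ) (hα2 : 0 < α2) (hmin : 0 < xmin) (h : xmin < xmax)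
    (h' : ℝ → ℝ → ℝ)
    (hdef : ∀ x1 x2, h' x1 x2 =
      Real.exp (-2 * α2 * (1 / x1 + 1 / x2)) * (1 / x1 - 1 / x2) ^ 2) :
    ∀ x1 x2 : ℝ, xmin ≤ x1 → x1 ≤ x2 → x2 ≤ xmax →
      h' x1 x2 ≤ h' (max (α2 * xmax / (α2 + xmax)) xmin) xmax := by
  intro x1 x2 hx1 h12 hx2
  have hx1p : 0 < x1 := hmin.trans_le hx1
  have hx2p : 0 < x2 := hx1p.trans_le h12
  have hbv := one_div_le_one_div_of_le hx2p hx2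
  have hvu := one_div_le_one_div_of_le hx1p h12
  have hua := one_div_le_one_div_of_le hmin hx1
  rw [hdef, hdef, one_div_max_div_add hα2 hmin (hmin.trans h)]
  refine (exp_mul_sq_le_of_le hα2.le hbv hvu).trans ?_
  rw [exp_mul_sq_eq, exp_mul_sq_eq, add_sub_cancel_left]
  have hub : 0 ≤ 1 / x1 - 1 / xmax := by linarith
  have hf := mul_exp_neg_mul_le_min hα2 hub (show _ ≤ 1 / xmin - 1 / xmax by linarith)
  gcongr ?_ ^ 2
  exact mul_le_mul_of_nonneg_left hf (exp_pos _).le
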